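/- arXiv:1901.09671 — 2 statements merged into one kernel-verified Lean document; each statement's English description precedes it below -/
import Mathlib

section
/- Let f(x) = (1/n) Σ_{i=1}^n f_i(x) where each f_i : ℝ^d → ℝ is differentiable, let c divide n, and for i ∈ [n/c] let g[i](x) = Σ_{j=1}^c ∇f_{c(i-1)+j}(x). Let Y_1, ..., Y_{n/c} be the block non-straggler indicators induced by a uniformly random r-subset of k workers partitioned into n/c blocks of size ℓ = kc/n (2ℓ ≤ k), and let g(x) = (1/n) Σ_{i=1}^{n/c} Y_i g[i](x). Then E[‖g(x)‖²] = (1-q)‖∇f(x)‖² + ((q-p)/n²) Σ_{i=1}^{n/c} ‖g[i](x)‖², where p, q satisfy E[Y_i] = 1-p and E[Y_i Y_j] = 1-q for i ≠ j. -/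
/-!
With `vᵢ = g[i] / n`, expanding the square gives `E‖Σᵢ Yᵢ vᵢ‖² = Σᵢⱼ E[YᵢYⱼ] ⟪vᵢ, vⱼ⟫`.
Since `Yᵢ² = Yᵢ`, the diagonal moments are `1 - p` and the off-diagonal ones `1 - q`, so the
double sum is `(1 - q) ‖Σᵢ vᵢ‖² + (q - p) Σᵢ ‖vᵢ‖²`. Finally `Σᵢ g[i] = Σₜ ∇fₜ = n ∇f`,
because the blocks partition the tasks.
-/

open Finset

/-- Uniform expectation over all `r`-element subsets of the `k` workers. -/
noncomputable def unifExp (k r : ℕ) (X : Finset (Fin k) → ℝ) : ℝ :=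
  (∑ S ∈ Finset.powersetCard r (Finset.univ : Finset (Fin k)), X S) / (k.choose r : ℝ)

/-- The index `c*(i-1)+j` (0-indexed: `c*i + j`) of the `j`-th task in the `i`-th block. -/
def taskIdx (n c : ℕ) (hc : c ∣ n) (i : Fin (n / c)) (j : Fin c) : Fin n :=
  ⟨c * i.val + j.val, by
    calc c * i.val + j.val < c * i.val + c := Nat.add_lt_add_left j.isLt _
      _ = c * (i.val + 1) := (Nat.mul_succ c i.val).symm
      _ ≤ c * (n / c) := Nat.mul_le_mul (Nat.le_refl c) i.isLt
      _ = n := Nat.mul_div_cancel' hc⟩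

open scoped RealInnerProductSpace

section Gradient

variable {E : Type*} [NormedAddCommGroup E] [InnerProductSpace ℝ E] [CompleteSpace E] {x : E}

theorem gradient_const_mul {f : E → ℝ} (hf : DifferentiableAt ℝ f x) (a : ℝ) :
    gradient (fun y => a * f y) x = a • gradient f x := by
  simp only [gradient, fderiv_const_mul hf, map_smul]

theorem gradient_fun_sum {ι : Type*} [Fintype ι] {f : ι → E → ℝ}
    (hf : ∀ i, DifferentiableAt ℝ (f i) x) :
    gradient (fun y => ∑ i, f i y) x = ∑ i, gradient (f i) x := by
  simp only [gradient, fderiv_fun_sum fun i _ => hf i, map_sum]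

end Gradient

theorem taskIdx_eq_finProdFinEquiv {n c : ℕ} (hc : c ∣ n) (i : Fin (n / c)) (j : Fin c) :
    taskIdx n c hc i j = Fin.cast (Nat.div_mul_cancel hc) (finProdFinEquiv (i, j)) := by
  ext
  simp [taskIdx, finProdFinEquiv, add_comm]

theorem sum_taskIdx {M : Type*} [AddCommMonoid M] {n c : ℕ} (hc : c ∣ n) (v : Fin n → M) :
    ∑ i, ∑ j, v (taskIdx n c hc i j) = ∑ t, v t := by
  rw [← Fintype.sum_prod_type']
  simp_rw [taskIdx_eq_finProdFinEquiv]
  exact Fintype.sum_equiv (finProdFinEquiv.trans (finCongr (Nat.div_mul_cancel hc))) _ _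
    fun _ => rfl

namespace unifExp

variable {k r : ℕ}

theorem sum {ι : Type*} (s : Finset ι) (X : ι → Finset (Fin k) → ℝ) :
    unifExp k r (fun S => ∑ i ∈ s, X i S) = ∑ i ∈ s, unifExp k r (X i) := by
  simp only [unifExp, Finset.sum_comm (s := powersetCard r _), Finset.sum_div]

theorem mul_const (X : Finset (Fin k) → ℝ) (a : ℝ) :
    unifExp k r (fun S => X S * a) = unifExp k r X * a := by
  simp only [unifExp, ← Finset.sum_mul, div_mul_eq_mul_div]

end unifExp

section InnerProduct

variable {ι E : Type*} [Fintype ι] [NormedAddCommGroup E] [InnerProductSpace ℝ E]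

theorem norm_sum_smul_sq (a : ι → ℝ) (v : ι → E) :
    ‖∑ i, a i • v i‖ ^ 2 = ∑ i, ∑ j, a i * a j * ⟪v i, v j⟫ := by
  rw [← real_inner_self_eq_norm_sq, sum_inner]
  simp_rw [inner_sum, real_inner_smul_left, real_inner_smul_right, mul_assoc]

theorem unifExp_norm_sum_smul_sq {k r : ℕ} (Y : ι → Finset (Fin k) → ℝ) (v : ι → E) :
    unifExp k r (fun S => ‖∑ i, Y i S • v i‖ ^ 2)
      = ∑ i, ∑ j, unifExp k r (fun S => Y i S * Y j S) * ⟪v i, v j⟫ := by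
  simp_rw [norm_sum_smul_sq, unifExp.sum, unifExp.mul_const]

theorem sum_sum_ite_mul_inner [DecidableEq ι] (α β : ℝ) (v : ι → E) :
    ∑ i, ∑ j, (if i = j then α else β) * ⟪v i, v j⟫
      = β * ‖∑ i, v i‖ ^ 2 + (α - β) * ∑ i, ‖v i‖ ^ 2 := by
  have hsplit : ∀ i j, (if i = j then α else β) * ⟪v i, v j⟫
      = β * ⟪v i, v j⟫ + if i = j then (α - β) * ⟪v i, v j⟫ else 0 := by
    intro i j; split_ifs <;> ring
  simp_rw [hsplit, Finset.sum_add_distrib, Finset.sum_ite_eq, Finset.mem_univ, if_true,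
    ← Finset.mul_sum, real_inner_self_eq_norm_sq, ← inner_sum, ← sum_inner,
    real_inner_self_eq_norm_sq]

end InnerProduct

theorem agc_second_moment_general {d n k c r : ℕ} (hc : c ∣ n)
    (W : Fin (n / c) → Finset (Fin k))
    (f : Fin n → EuclideanSpace ℝ (Fin d) → ℝ)
    (x : EuclideanSpace ℝ (Fin d))
    (hdiff : ∀ i, DifferentiableAt ℝ (f i) x)
    (F : EuclideanSpace ℝ (Fin d) → ℝ)
    (hF : F = fun y => (1 / (n : ℝ)) * ∑ i, f i y)
    (gB : Fin (n / c) → EuclideanSpace ℝ (Fin d))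
    (hgB : ∀ i, gB i = ∑ j : Fin c, gradient (f (taskIdx n c hc i j)) x)
    (p q : ℝ)
    (hEp : ∀ i, unifExp k r (fun S => if (S ∩ W i).Nonempty then (1 : ℝ) else 0) = 1 - p)
    (hEq : ∀ i j, i ≠ j →
      unifExp k r (fun S =>
        (if (S ∩ W i).Nonempty then (1 : ℝ) else 0) *
          (if (S ∩ W j).Nonempty then (1 : ℝ) else 0)) = 1 - q) :
    unifExp k r (fun S =>
        ‖(1 / (n : ℝ)) • ∑ i : Fin (n / c),
            (if (S ∩ W i).Nonempty then (1 : ℝ) else 0) • gB i‖ ^ 2)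
      = (1 - q) * ‖gradient F x‖ ^ 2
        + ((q - p) / (n : ℝ) ^ 2) * ∑ i : Fin (n / c), ‖gB i‖ ^ 2 := by
  set Y : Fin (n / c) → Finset (Fin k) → ℝ := fun i S => if (S ∩ W i).Nonempty then 1 else 0
  have hmoment : ∀ i j, unifExp k r (fun S => Y i S * Y j S) = if i = j then 1 - p else 1 - q := by
    intro i j
    by_cases hij : i = j
    · subst hij
      rw [if_pos rfl, ← hEp i]
      congr 1 with S
      simp only [Y]
      split_ifs <;> norm_num
    · rw [if_neg hij, ← hEq i j hij]
  have hgrad : gradient F x = (1 / (n : ℝ)) • ∑ i, gB i := by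
    rw [hF, gradient_const_mul (DifferentiableAt.fun_sum fun i _ => hdiff i),
      gradient_fun_sum hdiff]
    simp_rw [hgB, sum_taskIdx hc fun t => gradient (f t) x]
  calc _ = unifExp k r (fun S => ‖∑ i, Y i S • ((1 / (n : ℝ)) • gB i)‖ ^ 2) := by
        simp only [Y, Finset.smul_sum, smul_comm (1 / (n : ℝ))]
    _ = ∑ i, ∑ j, (if i = j then 1 - p else 1 - q)
          * ⟪(1 / (n : ℝ)) • gB i, (1 / (n : ℝ)) • gB j⟫ := by
        simp_rw [unifExp_norm_sum_smul_sq, hmoment]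
    _ = _ := by
        rw [sum_sum_ite_mul_inner, ← Finset.smul_sum, ← hgrad]
        simp_rw [norm_smul, mul_pow, ← Finset.mul_sum, Real.norm_eq_abs, sq_abs]
        ring

/-- Second moment of the FRC(n,k,c) approximate gradient code output:
`E[‖g(x)‖²] = (1-q)‖∇f(x)‖² + ((q-p)/n²) Σᵢ ‖g[i](x)‖²`, where `E[Yᵢ] = 1-p` and
`E[YᵢYⱼ] = 1-q` for `i ≠ j`. -/
theorem agc_second_moment {d n k c r ℓ : ℕ} (hn : 0 < n) (hc : c ∣ n)
    (hr : r ≤ k) (hℓ : ℓ = k * c / n) (h2ℓ : 2 * ℓ ≤ k)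
    (W : Fin (n / c) → Finset (Fin k))
    (hWcard : ∀ i, (W i).card = ℓ)
    (hWdisj : ∀ i j, i ≠ j → Disjoint (W i) (W j))
    (f : Fin n → EuclideanSpace ℝ (Fin d) → ℝ)
    (x : EuclideanSpace ℝ (Fin d))
    (hdiff : ∀ i, DifferentiableAt ℝ (f i) x)
    (F : EuclideanSpace ℝ (Fin d) → ℝ)
    (hF : F = fun y => (1 / (n : ℝ)) * ∑ i, f i y)
    (gB : Fin (n / c) → EuclideanSpace ℝ (Fin d))
    (hgB : ∀ i, gB i = ∑ j : Fin c, gradient (f (taskIdx n c hc i j)) x)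
    (p q : ℝ)
    (hEp : ∀ i, unifExp k r (fun S => if (S ∩ W i).Nonempty then (1 : ℝ) else 0) = 1 - p)
    (hEq : ∀ i j, i ≠ j →
      unifExp k r (fun S =>
        (if (S ∩ W i).Nonempty then (1 : ℝ) else 0) *
          (if (S ∩ W j).Nonempty then (1 : ℝ) else 0)) = 1 - q) :
    unifExp k r (fun S =>
        ‖(1 / (n : ℝ)) • ∑ i : Fin (n / c),
            (if (S ∩ W i).Nonempty then (1 : ℝ) else 0) • gB i‖ ^ 2)
      = (1 - q) * ‖gradient F x‖ ^ 2
        + ((q - p) / (n : ℝ) ^ 2) * ∑ i : Fin (n / c), ‖gB i‖ ^ 2 :=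
  agc_second_moment_general hc W f x hdiff F hF gB hgB p q hEp hEq
end

section
/- Suppose f(x) = (1/n) Σ_{i=1}^n f_i(x) is β-smooth and μ-PL with β ≥ μ > 0, each f_i is differentiable with ‖∇f_i(x)‖ ≤ σ for all i and x, and p < 1. Consider the iteration x_{t+1} = x_t - γ ĝ(x_t) with step size γ = 1/β, where ĝ(x) = g(x)/(1-p), g(x) = (1/n) Σ_{i=1}^{n/c} Y_i^{(t)} g[i](x), g[i](x) = Σ_{j=1}^c ∇f_{c(i-1)+j}(x), and at each iteration the block indicators Y^{(t)} are induced by an independent uniformly random r-subset of the k workers (partitioned into n/c blocks of size ℓ = kc/n, 2ℓ ≤ k). Then Δ_T := E[f(x_T) - f*] satisfies Δ_T ≤ (1 - μ/β)^T Δ_0 + (σ²/(2(1-p)μ))·(p + (q-p)c/((1-p)n)). -/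
open Finset

/-- The trajectory obtained by starting at `x0` and, at step `t`, applying the update
`upd (ω t)` determined by the non-straggler set `ω t` of that iteration. -/
def traj {k : ℕ} {E : Type*} (x0 : E) (upd : Finset (Fin k) → E → E)
    (ω : ℕ → Finset (Fin k)) : ℕ → E
  | 0 => x0
  | t + 1 => upd (ω t) (traj x0 upd ω t)

/-!
Every iteration is a gradient step with an unbiased estimator: a block is received with
probability `1 - p` and two distinct blocks are received together with probability `1 - q`, so
`ĝ` has mean `∇f` and second moment at most `‖∇f‖² / (1 - p) + (q - p) c σ² / ((1 - p)² n)`.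
The descent lemma for the `β`-smooth `f` and the PL inequality then give
`E[f(x⁺) - f*] ≤ (1 - μ/β) (f(x) - f*) + b`, and unrolling this over `T` independent iterations
with `∑ (1 - μ/β)^t ≤ β/μ` gives the bound. Expectations are written as sums over the `C(k, r)`
non-straggler sets of one iteration, resp. over the `C(k, r)^T` sequences of them.
-/

open scoped RealInnerProductSpace

section Trajectory

variable {k : ℕ} {E : Type*}

theorem traj_succ (x0 : E) (upd : Finset (Fin k) → E → E) (ω : ℕ → Finset (Fin k)) (T : ℕ) :
    traj x0 upd ω (T + 1) = traj (upd (ω 0) x0) upd (fun t => ω (t + 1)) T := by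
  induction T with
  | zero => rfl
  | succ T ih => rw [traj, ih, traj]

theorem traj_pad_cons (x0 : E) (upd : Finset (Fin k) → E → E) {T : ℕ} (S : Finset (Fin k))
    (ω : Fin T → Finset (Fin k)) :
    traj x0 upd (fun t => if h : t < T + 1 then (Fin.cons S ω : Fin (T + 1) → _) ⟨t, h⟩ else ∅)
        (T + 1)
      = traj (upd S x0) upd (fun t => if h : t < T then ω ⟨t, h⟩ else ∅) T := by
  rw [traj_succ]
  congr 2
  funext t
  by_cases ht : t < T
  · simp [ht, ← Fin.succ_mk]
  · simp [ht]

theorem sum_piFinset_const_succ {α M : Type*} [AddCommMonoid M] {T : ℕ} (P : Finset α)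
    (h : (Fin (T + 1) → α) → M) :
    ∑ ω ∈ Fintype.piFinset (fun _ => P), h ω
      = ∑ a ∈ P, ∑ ω ∈ Fintype.piFinset (fun _ : Fin T => P), h (Fin.cons a ω) := by
  classical
  have hsplit := filter_piFinset_eq_map_consEquiv (fun _ : Fin (T + 1) => P) (fun _ => True)
  rw [filter_true, filter_true] at hsplit
  rw [hsplit, sum_map, sum_product]
  rfl

theorem sum_piFinset_traj_le (P : Finset (Finset (Fin k))) (upd : Finset (Fin k) → E → E)
    (Φ : E → ℝ) {a b : ℝ} (ha : 0 ≤ a)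
    (hstep : ∀ x, ∑ S ∈ P, Φ (upd S x) ≤ #P * (a * Φ x + b)) (T : ℕ) (x0 : E) :
    ∑ ω ∈ Fintype.piFinset (fun _ : Fin T => P),
        Φ (traj x0 upd (fun t => if h : t < T then ω ⟨t, h⟩ else ∅) T)
      ≤ (#P : ℝ) ^ T * (a ^ T * Φ x0 + b * ∑ t ∈ range T, a ^ t) := by
  induction T generalizing x0 with
  | zero => simp [traj]
  | succ T ih =>
    simp only [sum_piFinset_const_succ, traj_pad_cons]
    calc ∑ S ∈ P, ∑ ω ∈ Fintype.piFinset (fun _ : Fin T => P),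
            Φ (traj (upd S x0) upd (fun t => if h : t < T then ω ⟨t, h⟩ else ∅) T)
        ≤ ∑ S ∈ P, (#P : ℝ) ^ T * (a ^ T * Φ (upd S x0) + b * ∑ t ∈ range T, a ^ t) :=
          sum_le_sum fun S _ => ih (upd S x0)
      _ = (#P : ℝ) ^ T * (a ^ T * ∑ S ∈ P, Φ (upd S x0) + #P * (b * ∑ t ∈ range T, a ^ t)) := by
          rw [← mul_sum, sum_add_distrib, ← mul_sum, sum_const, nsmul_eq_mul]
      _ ≤ (#P : ℝ) ^ T * (a ^ T * (#P * (a * Φ x0 + b)) + #P * (b * ∑ t ∈ range T, a ^ t)) := by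
          gcongr
          exact hstep x0
      _ = (#P : ℝ) ^ (T + 1) * (a ^ (T + 1) * Φ x0 + b * ∑ t ∈ range (T + 1), a ^ t) := by
          rw [sum_range_succ]
          ring

end Trajectory

section Sampling

variable {α : Type*} [DecidableEq α]

theorem ite_inter_nonempty_eq_one_sub (S A : Finset α) :
    (if (S ∩ A).Nonempty then (1 : ℝ) else 0) = 1 - if Disjoint S A then 1 else 0 := by
  by_cases h : Disjoint S A
  · simp [h, disjoint_iff_inter_eq_empty.mp h]
  · simp [h, not_disjoint_iff_nonempty_inter.mp h]

variable [Fintype α] (r : ℕ)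

theorem sum_powersetCard_ite_disjoint (A : Finset α) :
    ∑ S ∈ powersetCard r (univ : Finset α), (if Disjoint S A then (1 : ℝ) else 0)
      = ((Fintype.card α - #A).choose r : ℝ) := by
  have hfilter : {S ∈ powersetCard r (univ : Finset α) | Disjoint S A} = powersetCard r Aᶜ := by
    ext S
    simp [subset_compl_iff_disjoint_right, and_comm]
  rw [sum_boole, hfilter, card_powersetCard, card_compl]

theorem sum_powersetCard_ite_inter_nonempty (A : Finset α) :
    ∑ S ∈ powersetCard r (univ : Finset α), (if (S ∩ A).Nonempty then (1 : ℝ) else 0)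
      = ((Fintype.card α).choose r : ℝ) - ((Fintype.card α - #A).choose r : ℝ) := by
  simp only [ite_inter_nonempty_eq_one_sub, sum_sub_distrib, sum_powersetCard_ite_disjoint,
    sum_const, card_powersetCard, card_univ, nsmul_one]

/-- Inclusion–exclusion, with `Disjoint S (A ∪ B) ↔ Disjoint S A ∧ Disjoint S B`. -/
theorem sum_powersetCard_ite_inter_nonempty_mul {A B : Finset α} (hAB : Disjoint A B) :
    ∑ S ∈ powersetCard r (univ : Finset α),
        (if (S ∩ A).Nonempty then (1 : ℝ) else 0) * (if (S ∩ B).Nonempty then (1 : ℝ) else 0)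
      = ((Fintype.card α).choose r : ℝ) - ((Fintype.card α - #A).choose r : ℝ)
        - ((Fintype.card α - #B).choose r : ℝ) + ((Fintype.card α - (#A + #B)).choose r : ℝ) := by
  have hmul : ∀ S : Finset α,
      (if (S ∩ A).Nonempty then (1 : ℝ) else 0) * (if (S ∩ B).Nonempty then (1 : ℝ) else 0)
        = 1 - (if Disjoint S A then 1 else 0) - (if Disjoint S B then 1 else 0)
          + if Disjoint S (A ∪ B) then 1 else 0 := by
    intro S
    simp only [ite_inter_nonempty_eq_one_sub, disjoint_union_right]
    by_cases hA : Disjoint S A <;> by_cases hB : Disjoint S B <;> simp [hA, hB]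
  simp only [hmul, sum_add_distrib, sum_sub_distrib, sum_powersetCard_ite_disjoint,
    card_union_of_disjoint hAB, sum_const, card_powersetCard, card_univ, nsmul_one]

end Sampling

section Estimator

variable {Ω E : Type*} [NormedAddCommGroup E] [InnerProductSpace ℝ E]

theorem sum_norm_sq_sum_smul {ι : Type*} [Fintype ι] [DecidableEq ι] (P : Finset Ω)
    (Y : Ω → ι → ℝ) (g : ι → E) {a b : ℝ} (hdiag : ∀ i, ∑ S ∈ P, Y S i * Y S i = a)
    (hoff : ∀ i j, i ≠ j → ∑ S ∈ P, Y S i * Y S j = b) :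
    ∑ S ∈ P, ‖∑ i, Y S i • g i‖ ^ 2 = b * ‖∑ i, g i‖ ^ 2 + (a - b) * ∑ i, ‖g i‖ ^ 2 := by
  have hcorr : ∀ i j, ∑ S ∈ P, Y S i * Y S j = b + if i = j then a - b else 0 := by
    intro i j
    by_cases hij : i = j
    · subst hij; simp [hdiag]
    · simp [hoff i j hij, hij]
  calc ∑ S ∈ P, ‖∑ i, Y S i • g i‖ ^ 2
      = ∑ i, ∑ j, (∑ S ∈ P, Y S i * Y S j) * ⟪g i, g j⟫ := by
        simp_rw [← real_inner_self_eq_norm_sq, sum_inner, inner_sum, real_inner_smul_left,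
          real_inner_smul_right, sum_mul]
        rw [sum_comm]
        refine sum_congr rfl fun i _ => ?_
        rw [sum_comm]
        refine sum_congr rfl fun j _ => sum_congr rfl fun S _ => by ring
    _ = b * ‖∑ i, g i‖ ^ 2 + (a - b) * ∑ i, ‖g i‖ ^ 2 := by
        simp_rw [hcorr, add_mul, sum_add_distrib, ite_mul, zero_mul, sum_ite_eq, mem_univ,
          if_true, ← mul_sum, real_inner_self_eq_norm_sq, ← inner_sum, ← sum_inner,
          real_inner_self_eq_norm_sq]

theorem sum_descent_step_le {F : E → ℝ} {x G : E} {β M : ℝ} (hβ : 0 < β)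
    (hsmooth : ∀ y, F y ≤ F x + ⟪G, y - x⟫ + β / 2 * ‖y - x‖ ^ 2) (P : Finset Ω) (v : Ω → E)
    (hmean : ∑ S ∈ P, v S = (#P : ℝ) • G) (hvar : ∑ S ∈ P, ‖v S‖ ^ 2 ≤ #P * M) :
    ∑ S ∈ P, F (x - (1 / β) • v S) ≤ #P * (F x - ‖G‖ ^ 2 / β + M / (2 * β)) := by
  have hstep : ∀ S, F (x - (1 / β) • v S) ≤ F x - ⟪G, v S⟫ / β + ‖v S‖ ^ 2 / (2 * β) := by
    intro S
    have h := hsmooth (x - (1 / β) • v S)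
    rw [sub_sub_cancel_left, inner_neg_right, real_inner_smul_right, norm_neg, norm_smul,
      Real.norm_of_nonneg (by positivity)] at h
    convert h using 1
    field_simp
    ring
  calc ∑ S ∈ P, F (x - (1 / β) • v S)
      ≤ ∑ S ∈ P, (F x - ⟪G, v S⟫ / β + ‖v S‖ ^ 2 / (2 * β)) := sum_le_sum fun S _ => hstep S
    _ = #P * F x - ⟪G, ∑ S ∈ P, v S⟫ / β + (∑ S ∈ P, ‖v S‖ ^ 2) / (2 * β) := by
        rw [sum_add_distrib, sum_sub_distrib, sum_const, nsmul_eq_mul, inner_sum, sum_div,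
          sum_div]
    _ ≤ #P * (F x - ‖G‖ ^ 2 / β + M / (2 * β)) := by
        rw [hmean, real_inner_smul_right, real_inner_self_eq_norm_sq]
        have := div_le_div_of_nonneg_right hvar (by positivity : (0 : ℝ) ≤ 2 * β)
        linarith [show (#P : ℝ) * (F x - ‖G‖ ^ 2 / β + M / (2 * β))
          = #P * F x - #P * ‖G‖ ^ 2 / β + #P * M / (2 * β) by ring]

end Estimator

section ErasureHead

variable {E : Type*} [NormedAddCommGroup E] [InnerProductSpace ℝ E] [CompleteSpace E]
  {n c k : ℕ}

theorem sum_eq_sum_sum_taskIdx {M : Type*} [AddCommMonoid M] (hc : c ∣ n) (u : Fin n → M) :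
    ∑ i, u i = ∑ i : Fin (n / c), ∑ j : Fin c, u (taskIdx n c hc i j) := by
  rw [← Fintype.sum_prod_type',
    ← (finProdFinEquiv.trans (finCongr (Nat.div_mul_cancel hc))).sum_comp]
  refine Fintype.sum_congr _ _ fun ⟨i, j⟩ => congrArg u (Fin.ext ?_)
  simp [taskIdx, add_comm]

theorem gradient_const_mul_sum {ι : Type*} [Fintype ι] (f : ι → E → ℝ)
    (hdiff : ∀ i, Differentiable ℝ (f i)) (a : ℝ) (x : E) :
    gradient (fun y => a * ∑ i, f i y) x = a • ∑ i, gradient (f i) x := by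
  have hsum : ∀ i ∈ (univ : Finset ι), DifferentiableAt ℝ (f i) x := fun i _ => hdiff i x
  rw [gradient, fderiv_const_mul (DifferentiableAt.fun_sum hsum), fderiv_fun_sum hsum,
    map_smul, map_sum]
  rfl

noncomputable def blockGrad (hc : c ∣ n) (f : Fin n → E → ℝ) (x : E) (i : Fin (n / c)) : E :=
  ∑ j, gradient (f (taskIdx n c hc i j)) x

/-- The paper's `Y_i`: whether block `i` contains a non-straggler of `S`. -/
def blockIndicator (W : Fin (n / c) → Finset (Fin k)) (S : Finset (Fin k)) (i : Fin (n / c)) :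
    ℝ :=
  if (S ∩ W i).Nonempty then 1 else 0

/-- The paper's `ĝ`. -/
noncomputable def erasureGrad (p : ℝ) (W : Fin (n / c) → Finset (Fin k)) (hc : c ∣ n)
    (f : Fin n → E → ℝ) (S : Finset (Fin k)) (x : E) : E :=
  (1 - p)⁻¹ • ((1 / (n : ℝ)) • ∑ i, blockIndicator W S i • blockGrad hc f x i)

theorem gradient_mean_eq_sum_blockGrad (hc : c ∣ n) {f : Fin n → E → ℝ}
    (hdiff : ∀ i, Differentiable ℝ (f i)) (x : E) :
    gradient (fun y => (1 / (n : ℝ)) * ∑ i, f i y) x = (1 / (n : ℝ)) • ∑ i, blockGrad hc f x i := by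
  rw [gradient_const_mul_sum f hdiff, sum_eq_sum_sum_taskIdx hc]
  rfl

theorem norm_blockGrad_le (hc : c ∣ n) {f : Fin n → E → ℝ} {σ : ℝ}
    (hσ : ∀ i x, ‖gradient (f i) x‖ ≤ σ) (x : E) (i : Fin (n / c)) :
    ‖blockGrad hc f x i‖ ≤ c * σ := by
  calc ‖blockGrad hc f x i‖ ≤ ∑ j : Fin c, ‖gradient (f (taskIdx n c hc i j)) x‖ := norm_sum_le _ _
    _ ≤ ∑ _j : Fin c, σ := sum_le_sum fun j _ => hσ _ x
    _ = c * σ := by simp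

theorem norm_gradient_mean_le (hn : 0 < n) {f : Fin n → E → ℝ}
    (hdiff : ∀ i, Differentiable ℝ (f i)) {σ : ℝ} (hσ : ∀ i x, ‖gradient (f i) x‖ ≤ σ) (x : E) :
    ‖gradient (fun y => (1 / (n : ℝ)) * ∑ i, f i y) x‖ ≤ σ := by
  rw [gradient_const_mul_sum f hdiff, norm_smul, Real.norm_of_nonneg (by positivity)]
  calc 1 / (n : ℝ) * ‖∑ i, gradient (f i) x‖ ≤ 1 / n * ∑ _i : Fin n, σ := by
        gcongr
        exact (norm_sum_le _ _).trans (sum_le_sum fun i _ => hσ i x)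
    _ = σ := by field_simp; simp

/-- Probability that a fixed block of `ℓ` workers contains none of `r` uniformly random
non-stragglers. -/
noncomputable def erasureProb (k ℓ r : ℕ) : ℝ :=
  ((k - ℓ).choose r : ℝ) / (k.choose r : ℝ)

/-- Probability that at least one of two fixed disjoint blocks of `ℓ` workers contains none of `r`
uniformly random non-stragglers. -/
noncomputable def pairErasureProb (k ℓ r : ℕ) : ℝ :=
  (2 * ((k - ℓ).choose r : ℝ) - ((k - 2 * ℓ).choose r : ℝ)) / (k.choose r : ℝ)

theorem erasureProb_nonneg (k ℓ r : ℕ) : 0 ≤ erasureProb k ℓ r := by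
  unfold erasureProb
  positivity

theorem erasureProb_le_pairErasureProb (k ℓ r : ℕ) : erasureProb k ℓ r ≤ pairErasureProb k ℓ r := by
  have hmono : ((k - 2 * ℓ).choose r : ℝ) ≤ (k - ℓ).choose r := by
    exact_mod_cast Nat.choose_le_choose r (by omega)
  unfold erasureProb pairErasureProb
  gcongr
  linarith

variable {r ℓ : ℕ} {W : Fin (n / c) → Finset (Fin k)}

theorem blockIndicator_mul_self (S : Finset (Fin k)) (i : Fin (n / c)) :
    blockIndicator W S i * blockIndicator W S i = blockIndicator W S i := by
  unfold blockIndicator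
  split_ifs <;> norm_num

theorem sum_blockIndicator {p : ℝ} (hr : r ≤ k) (hWcard : ∀ i, #(W i) = ℓ)
    (hp : p = erasureProb k ℓ r) (i : Fin (n / c)) :
    ∑ S ∈ powersetCard r univ, blockIndicator W S i = k.choose r * (1 - p) := by
  have hN : (k.choose r : ℝ) ≠ 0 := by exact_mod_cast (Nat.choose_pos hr).ne'
  unfold blockIndicator
  rw [sum_powersetCard_ite_inter_nonempty, hWcard, Fintype.card_fin, hp, erasureProb]
  field_simp

theorem sum_blockIndicator_mul {q : ℝ} (hr : r ≤ k) (hWcard : ∀ i, #(W i) = ℓ)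
    (hWdisj : ∀ i j, i ≠ j → Disjoint (W i) (W j))
    (hq : q = pairErasureProb k ℓ r) {i j : Fin (n / c)} (hij : i ≠ j) :
    ∑ S ∈ powersetCard r univ, blockIndicator W S i * blockIndicator W S j
      = k.choose r * (1 - q) := by
  have hN : (k.choose r : ℝ) ≠ 0 := by exact_mod_cast (Nat.choose_pos hr).ne'
  unfold blockIndicator
  rw [sum_powersetCard_ite_inter_nonempty_mul r (hWdisj i j hij),
    hWcard, hWcard, Fintype.card_fin, ← two_mul, hq, pairErasureProb]
  field_simp
  ring

theorem sum_erasureGrad (hc : c ∣ n) {f : Fin n → E → ℝ} (hdiff : ∀ i, Differentiable ℝ (f i))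
    {p : ℝ} (hr : r ≤ k) (hWcard : ∀ i, #(W i) = ℓ) (hp : p = erasureProb k ℓ r) (hp1 : p < 1)
    (x : E) :
    ∑ S ∈ powersetCard r univ, erasureGrad p W hc f S x
      = (k.choose r : ℝ) • gradient (fun y => (1 / (n : ℝ)) * ∑ i, f i y) x := by
  have h1p : 1 - p ≠ 0 := by linarith
  simp only [erasureGrad]
  rw [← smul_sum, ← smul_sum, sum_comm]
  simp only [← sum_smul, sum_blockIndicator hr hWcard hp]
  rw [gradient_mean_eq_sum_blockGrad hc hdiff, smul_comm, ← smul_sum, smul_smul, smul_smul,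
    smul_smul]
  congr 1
  field_simp

theorem sum_norm_sq_erasureGrad_le (hn : 0 < n) (hc : c ∣ n) {f : Fin n → E → ℝ}
    (hdiff : ∀ i, Differentiable ℝ (f i)) {σ : ℝ} (hσ : ∀ i x, ‖gradient (f i) x‖ ≤ σ)
    {p q : ℝ} (hr : r ≤ k) (hWcard : ∀ i, #(W i) = ℓ)
    (hWdisj : ∀ i j, i ≠ j → Disjoint (W i) (W j)) (hp : p = erasureProb k ℓ r)
    (hq : q = pairErasureProb k ℓ r) (hp1 : p < 1) (x : E) :
    ∑ S ∈ powersetCard r univ, ‖erasureGrad p W hc f S x‖ ^ 2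
      ≤ k.choose r * ((1 - p)⁻¹ * ‖gradient (fun y => (1 / (n : ℝ)) * ∑ i, f i y) x‖ ^ 2
        + (q - p) / (1 - p) ^ 2 * (c * σ ^ 2 / n)) := by
  set g := blockGrad hc f x
  set gradF := gradient (fun y => (1 / (n : ℝ)) * ∑ i, f i y) x
  have hnR : (0 : ℝ) < n := by exact_mod_cast hn
  have h1p : 0 < 1 - p := by linarith
  have hqp : p ≤ q := hp ▸ hq ▸ erasureProb_le_pairErasureProb k ℓ r
  have hmoment := sum_norm_sq_sum_smul (powersetCard r univ) (blockIndicator W) g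
    (a := k.choose r * (1 - p)) (b := k.choose r * (1 - q))
    (fun i => by simp only [blockIndicator_mul_self, sum_blockIndicator hr hWcard hp])
    (fun i j hij => sum_blockIndicator_mul hr hWcard hWdisj hq hij)
  have hmean : ‖∑ i, g i‖ = n * ‖gradF‖ := by
    rw [show gradF = _ from gradient_mean_eq_sum_blockGrad hc hdiff x, norm_smul,
      Real.norm_of_nonneg (by positivity), ← mul_assoc, mul_one_div_cancel hnR.ne', one_mul]
  have hblocks : ∑ i, ‖g i‖ ^ 2 ≤ n * c * σ ^ 2 := by
    have hcount : ((n / c : ℕ) : ℝ) * c = n := by exact_mod_cast Nat.div_mul_cancel hc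
    calc ∑ i, ‖g i‖ ^ 2 ≤ ∑ _i : Fin (n / c), ((c : ℝ) * σ) ^ 2 := by
          gcongr with i
          exact norm_blockGrad_le hc hσ x i
      _ = n * c * σ ^ 2 := by simp [← hcount]; ring
  have hscale : ∀ S, ‖erasureGrad p W hc f S x‖ ^ 2
      = ((1 - p) ^ 2 * n ^ 2)⁻¹ * ‖∑ i, blockIndicator W S i • g i‖ ^ 2 := by
    intro S
    rw [erasureGrad, norm_smul, norm_smul, Real.norm_of_nonneg (by positivity),
      Real.norm_of_nonneg (by positivity)]
    field_simp
    rfl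
  rw [sum_congr rfl fun S _ => hscale S, ← mul_sum, hmoment, hmean]
  have hvar : (k.choose r : ℝ) * (1 - p) - k.choose r * (1 - q) = k.choose r * (q - p) := by ring
  rw [hvar]
  have h1q : 1 - q ≤ 1 - p := by linarith
  calc ((1 - p) ^ 2 * n ^ 2)⁻¹ * (k.choose r * (1 - q) * (n * ‖gradF‖) ^ 2
        + k.choose r * (q - p) * ∑ i, ‖g i‖ ^ 2)
      ≤ ((1 - p) ^ 2 * n ^ 2)⁻¹ * (k.choose r * (1 - p) * (n * ‖gradF‖) ^ 2
        + k.choose r * (q - p) * (n * c * σ ^ 2)) := by gcongr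
    _ = _ := by field_simp

/-- The PL inequality turns the decrease `‖∇F x‖² / (2β)` into the contraction `1 - μ / β`, and
`‖∇F x‖ ≤ σ` absorbs the term `p ‖∇F x‖² / (2β(1 - p))` coming from the erasures. -/
theorem sum_erasureHead_step_le (hn : 0 < n) (hc : c ∣ n) {f : Fin n → E → ℝ}
    (hdiff : ∀ i, Differentiable ℝ (f i)) {σ β μ fstar : ℝ} (hμ : 0 < μ) (hβμ : μ ≤ β)
    (hσ : ∀ i x, ‖gradient (f i) x‖ ≤ σ) {F : E → ℝ}
    (hF : F = fun y => (1 / (n : ℝ)) * ∑ i, f i y)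
    (hsmooth : ∀ x y, F y ≤ F x + ⟪gradient F x, y - x⟫ + (β / 2) * ‖y - x‖ ^ 2)
    (hPL : ∀ x, μ * (F x - fstar) ≤ (1 / 2) * ‖gradient F x‖ ^ 2) {p q : ℝ} (hr : r ≤ k)
    (hWcard : ∀ i, #(W i) = ℓ) (hWdisj : ∀ i j, i ≠ j → Disjoint (W i) (W j))
    (hp : p = erasureProb k ℓ r) (hq : q = pairErasureProb k ℓ r) (hp1 : p < 1) (x : E) :
    ∑ S ∈ powersetCard r univ, (F (x - (1 / β) • erasureGrad p W hc f S x) - fstar)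
      ≤ #(powersetCard r (univ : Finset (Fin k))) * ((1 - μ / β) * (F x - fstar)
        + σ ^ 2 / (2 * β * (1 - p)) * (p + (q - p) * c / ((1 - p) * n))) := by
  have hβ : 0 < β := hμ.trans_le hβμ
  have h1p : 0 < 1 - p := by linarith
  have hp0 : 0 ≤ p := hp ▸ erasureProb_nonneg k ℓ r
  have hcard : (#(powersetCard r (univ : Finset (Fin k))) : ℝ) = k.choose r := by simp
  have hdescent := sum_descent_step_le hβ (hsmooth x) (powersetCard r univ)
    (fun S => erasureGrad p W hc f S x)
    (M := (1 - p)⁻¹ * ‖gradient F x‖ ^ 2 + (q - p) / (1 - p) ^ 2 * (c * σ ^ 2 / n))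
    (by rw [hcard, hF]; exact sum_erasureGrad hc hdiff hr hWcard hp hp1 x)
    (by
      rw [hcard, hF]
      exact sum_norm_sq_erasureGrad_le hn hc hdiff hσ hr hWcard hWdisj hp hq hp1 x)
  set gradF := gradient F x
  have hgradF : ‖gradF‖ ^ 2 ≤ σ ^ 2 := by
    have := hF ▸ norm_gradient_mean_le hn hdiff hσ x
    gcongr
  have hgap : (1 - μ / β) * (F x - fstar)
        + σ ^ 2 / (2 * β * (1 - p)) * (p + (q - p) * c / ((1 - p) * n))
      - (F x - ‖gradF‖ ^ 2 / β
        + ((1 - p)⁻¹ * ‖gradF‖ ^ 2 + (q - p) / (1 - p) ^ 2 * (c * σ ^ 2 / n)) / (2 * β) - fstar)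
      = (1 / 2 * ‖gradF‖ ^ 2 - μ * (F x - fstar)) / β
        + p * (σ ^ 2 - ‖gradF‖ ^ 2) / (2 * β * (1 - p)) := by
    field_simp
    ring
  have hPLx : 0 ≤ (1 / 2 * ‖gradF‖ ^ 2 - μ * (F x - fstar)) / β :=
    div_nonneg (by linarith [hPL x]) hβ.le
  have herase : 0 ≤ p * (σ ^ 2 - ‖gradF‖ ^ 2) / (2 * β * (1 - p)) :=
    div_nonneg (mul_nonneg hp0 (by linarith)) (by positivity)
  have hone := sub_nonneg.1 (hgap ▸ add_nonneg hPLx herase)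
  rw [sum_sub_distrib, sum_const, nsmul_eq_mul, hcard]
  rw [hcard] at hdescent
  linarith [mul_le_mul_of_nonneg_left hone (Nat.cast_nonneg (α := ℝ) (k.choose r))]

end ErasureHead

theorem erasurehead_convergence_step_one_over_beta_general
    {d n k c r ℓ T : ℕ} (hn : 0 < n) (hc : c ∣ n)
    (hr : r ≤ k)
    (W : Fin (n / c) → Finset (Fin k))
    (hWcard : ∀ i, (W i).card = ℓ)
    (hWdisj : ∀ i j, i ≠ j → Disjoint (W i) (W j))
    (f : Fin n → EuclideanSpace ℝ (Fin d) → ℝ)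
    (hdiff : ∀ i, Differentiable ℝ (f i))
    (σ β μ fstar : ℝ) (hμ : 0 < μ) (hβμ : μ ≤ β)
    (hσ : ∀ i x, ‖gradient (f i) x‖ ≤ σ)
    (F : EuclideanSpace ℝ (Fin d) → ℝ)
    (hF : F = fun y => (1 / (n : ℝ)) * ∑ i, f i y)
    (hsmooth : ∀ x y, F y ≤ F x + inner ℝ (gradient F x) (y - x) + (β / 2) * ‖y - x‖ ^ 2)
    (hPL : ∀ x, μ * (F x - fstar) ≤ (1 / 2) * ‖gradient F x‖ ^ 2)
    (p q : ℝ)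
    (hp : p = ((k - ℓ).choose r : ℝ) / (k.choose r : ℝ))
    (hq : q = (2 * ((k - ℓ).choose r : ℝ) - ((k - 2 * ℓ).choose r : ℝ)) / (k.choose r : ℝ))
    (hp1 : p < 1)
    (x0 : EuclideanSpace ℝ (Fin d))
    (X : (ℕ → Finset (Fin k)) → ℕ → EuclideanSpace ℝ (Fin d))
    (hX : X = fun ω => traj x0 (fun S x => x - (1 / β) • ((1 - p)⁻¹ •
        ((1 / (n : ℝ)) • ∑ i : Fin (n / c),
          (if (S ∩ W i).Nonempty then (1 : ℝ) else 0) •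
            ∑ j : Fin c, gradient (f (taskIdx n c hc i j)) x)) ) ω)
    (ΔT : ℝ)
    (hΔT : ΔT = (∑ ω ∈ Fintype.piFinset
          (fun _ : Fin T => Finset.powersetCard r (Finset.univ : Finset (Fin k))),
        (F (X (fun t => if h : t < T then ω ⟨t, h⟩ else ∅) T) - fstar))
      / ((k.choose r : ℝ)) ^ T) :
    ΔT ≤ (1 - μ / β) ^ T * (F x0 - fstar)
      + (σ ^ 2 / (2 * (1 - p) * μ)) * (p + (q - p) * c / ((1 - p) * n)) := by
  have hβ : 0 < β := hμ.trans_le hβμ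
  have hN : (0 : ℝ) < k.choose r := by exact_mod_cast Nat.choose_pos hr
  have hp0 : 0 ≤ p := hp ▸ erasureProb_nonneg k ℓ r
  have hqp : p ≤ q := hp ▸ hq ▸ erasureProb_le_pairErasureProb k ℓ r
  have hcontr : 0 ≤ 1 - μ / β := sub_nonneg.2 ((div_le_one hβ).2 hβμ)
  have hnoise : 0 ≤ σ ^ 2 / (2 * β * (1 - p)) * (p + (q - p) * c / ((1 - p) * n)) := by
    have : 0 ≤ q - p := sub_nonneg.2 hqp
    have : 0 < 1 - p := sub_pos.2 hp1
    positivity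
  have hgeom : ∑ t ∈ range T, (1 - μ / β) ^ t ≤ β / μ := by
    have h := geom_sum_Ico_le_of_lt_one (m := 0) (n := T) hcontr (by linarith [div_pos hμ hβ])
    rwa [Nat.Ico_zero_eq_range, pow_zero, sub_sub_cancel, one_div_div] at h
  have htraj := sum_piFinset_traj_le (powersetCard r univ)
    (fun S x => x - (1 / β) • erasureGrad p W hc f S x) (fun y => F y - fstar) hcontr
    (sum_erasureHead_step_le hn hc hdiff hμ hβμ hσ hF hsmooth hPL hr hWcard hWdisj hp hq hp1) T x0
  rw [hΔT, hX, div_le_iff₀ (by positivity)]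
  refine htraj.trans ?_
  rw [card_powersetCard, card_univ, Fintype.card_fin]
  calc _ ≤ (k.choose r : ℝ) ^ T * ((1 - μ / β) ^ T * (F x0 - fstar)
        + σ ^ 2 / (2 * β * (1 - p)) * (p + (q - p) * c / ((1 - p) * n)) * (β / μ)) := by gcongr
    _ = _ := by field_simp

/-- Convergence of ErasureHead (FRC(n,k,c) approximate-gradient-coded gradient descent) with
step size `γ = 1/β` on a `β`-smooth, `μ`-PL function: `Δ_T ≤ (1-μ/β)^T Δ_0 +
(σ²/(2(1-p)μ))(p + (q-p)c/((1-p)n))`. -/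
theorem erasurehead_convergence_step_one_over_beta
    {d n k c r ℓ T : ℕ} (hn : 0 < n) (hc : c ∣ n)
    (hr : r ≤ k) (hℓ : ℓ = k * c / n) (h2ℓ : 2 * ℓ ≤ k)
    (W : Fin (n / c) → Finset (Fin k))
    (hWcard : ∀ i, (W i).card = ℓ)
    (hWdisj : ∀ i j, i ≠ j → Disjoint (W i) (W j))
    (f : Fin n → EuclideanSpace ℝ (Fin d) → ℝ)
    (hdiff : ∀ i, Differentiable ℝ (f i))
    (σ β μ fstar : ℝ) (hμ : 0 < μ) (hβμ : μ ≤ β)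
    (hσ : ∀ i x, ‖gradient (f i) x‖ ≤ σ)
    (F : EuclideanSpace ℝ (Fin d) → ℝ)
    (hF : F = fun y => (1 / (n : ℝ)) * ∑ i, f i y)
    (hsmooth : ∀ x y, F y ≤ F x + inner ℝ (gradient F x) (y - x) + (β / 2) * ‖y - x‖ ^ 2)
    (hmin : ∀ x, fstar ≤ F x) (hattain : ∃ x, F x = fstar)
    (hPL : ∀ x, μ * (F x - fstar) ≤ (1 / 2) * ‖gradient F x‖ ^ 2)
    (p q : ℝ)
    (hp : p = ((k - ℓ).choose r : ℝ) / (k.choose r : ℝ))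
    (hq : q = (2 * ((k - ℓ).choose r : ℝ) - ((k - 2 * ℓ).choose r : ℝ)) / (k.choose r : ℝ))
    (hp1 : p < 1)
    (x0 : EuclideanSpace ℝ (Fin d))
    (X : (ℕ → Finset (Fin k)) → ℕ → EuclideanSpace ℝ (Fin d))
    (hX : X = fun ω => traj x0 (fun S x => x - (1 / β) • ((1 - p)⁻¹ •
        ((1 / (n : ℝ)) • ∑ i : Fin (n / c),
          (if (S ∩ W i).Nonempty then (1 : ℝ) else 0) •
            ∑ j : Fin c, gradient (f (taskIdx n c hc i j)) x)) ) ω)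
    (ΔT : ℝ)
    (hΔT : ΔT = (∑ ω ∈ Fintype.piFinset
          (fun _ : Fin T => Finset.powersetCard r (Finset.univ : Finset (Fin k))),
        (F (X (fun t => if h : t < T then ω ⟨t, h⟩ else ∅) T) - fstar))
      / ((k.choose r : ℝ)) ^ T) :
    ΔT ≤ (1 - μ / β) ^ T * (F x0 - fstar)
      + (σ ^ 2 / (2 * (1 - p) * μ)) * (p + (q - p) * c / ((1 - p) * n)) :=
  erasurehead_convergence_step_one_over_beta_general hn hc hr W hWcard hWdisj f hdiff σ β μ fstar hμ
    hβμ hσ F hF hsmooth hPL p q hp hq hp1 x0 X hX ΔT hΔT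
end
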